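/- Let c be an immersed closed curve, λ₀ > 0 a real number, and A and g directions with ⟨A(θ), c'(θ)⟩ = 0 and ⟨g(θ), c'(θ)⟩ = 0 for all θ (g plays the role of the L²(ds)-gradient at c of a reparametrization-invariant Hamiltonian H). Assume δ := 3λ₀ + ⟨A, c⟩_{L²} ≠ 0. Define X := −(1/(3λ₀))·{ T×g + (1/δ)·[ ⟨A, T×g⟩_{L²}·(T×(T×c)) − ⟨c, g⟩_{L²}·(T×A) ] }, where T = c'/|c'|. Then ⟨X(θ), c'(θ)⟩ = 0 for all θ, and Ω^λ(X, k) = ⟨g, k⟩_{L²} for every direction k; i.e. X is the horizontal Hamiltonian vector field of H with respect to the conformal presymplectic form Ω^λ. -/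

import Mathlib

noncomputable section

open Real

/-- Points of `ℝ³`. -/
abbrev V3 := Fin 3 → ℝ

/-- Euclidean inner product on `ℝ³`. -/
def dot3 (u v : V3) : ℝ := u 0 * v 0 + u 1 * v 1 + u 2 * v 2

/-- Cross product on `ℝ³`. -/
def cross3 (u v : V3) : V3 :=
  ![u 1 * v 2 - u 2 * v 1, u 2 * v 0 - u 0 * v 2, u 0 * v 1 - u 1 * v 0]

/-- Euclidean norm on `ℝ³`. -/
def norm3 (u : V3) : ℝ := Real.sqrt (dot3 u u)

/-- A closed curve: a smooth `2π`-periodic map `ℝ → ℝ³`. -/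
def IsClosedCurve (c : ℝ → V3) : Prop :=
  ContDiff ℝ (⊤ : ℕ∞) c ∧ ∀ θ, c (θ + 2 * π) = c θ

/-- An immersed closed curve: `c'(θ) ≠ 0` for all `θ`. -/
def IsImmersed (c : ℝ → V3) : Prop :=
  IsClosedCurve c ∧ ∀ θ, deriv c θ ≠ 0

/-- A direction (tangent vector): a smooth `2π`-periodic map `ℝ → ℝ³`. -/
def IsDirection (h : ℝ → V3) : Prop :=
  ContDiff ℝ (⊤ : ℕ∞) h ∧ ∀ θ, h (θ + 2 * π) = h θ

/-- Arc-length derivative along `c`: `D_s h = h'/|c'|`. -/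
def Ds (c h : ℝ → V3) : ℝ → V3 := fun θ => (norm3 (deriv c θ))⁻¹ • deriv h θ

/-- The unit tangent `T = D_s c = c'/|c'|`. -/
def unitT (c : ℝ → V3) : ℝ → V3 := Ds c c

/-- `D_s² c = D_s (D_s c)`. -/
def Ds2c (c : ℝ → V3) : ℝ → V3 := Ds c (Ds c c)

/-- Arc-length integral `∫ f ds = ∫₀^{2π} f(θ) |c'(θ)| dθ`. -/
def arcInt (c : ℝ → V3) (f : ℝ → ℝ) : ℝ :=
  ∫ θ in (0:ℝ)..(2 * π), f θ * norm3 (deriv c θ)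

/-- `L²(ds)` pairing `⟨f,g⟩_{L²} = ∫ ⟨f,g⟩ ds`. -/
def L2 (c f g : ℝ → V3) : ℝ := arcInt c (fun θ => dot3 (f θ) (g θ))

/-- Length `ℓ_c = ∫₀^{2π} |c'(θ)| dθ`. -/
def curveLen (c : ℝ → V3) : ℝ := ∫ θ in (0:ℝ)..(2 * π), norm3 (deriv c θ)

/-- The Liouville one-form for `L = id`: `Θ(c,h) = ∫₀^{2π} ⟨c × c', h⟩ dθ`. -/
def Theta (c h : ℝ → V3) : ℝ :=
  ∫ θ in (0:ℝ)..(2 * π), dot3 (cross3 (c θ) (deriv c θ)) (h θ)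

/-- The squared curvature `κ² = |D_s² c|²`. -/
def kappaSq (c : ℝ → V3) (θ : ℝ) : ℝ := dot3 (Ds2c c θ) (Ds2c c θ)

/-- The conformal presymplectic form at `c`, where `lam0` is the value of the conformal
factor `λ` at `c` and `A` is its `L²(ds)`-gradient at `c`:
`Ω^λ(h,k) = 3λ₀ ∫₀^{2π} ⟨c'×h, k⟩ dθ + Θ(c,h)·⟨A,k⟩_{L²} − Θ(c,k)·⟨A,h⟩_{L²}`. -/
def OmegaConf (c : ℝ → V3) (lam0 : ℝ) (A : ℝ → V3) (h k : ℝ → V3) : ℝ :=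
  3 * lam0 * (∫ θ in (0:ℝ)..(2 * π), dot3 (cross3 (deriv c θ) (h θ)) (k θ))
    + Theta c h * L2 c A k - Theta c k * L2 c A h

/-- The horizontal Hamiltonian vector field of a Hamiltonian with `L²(ds)`-gradient `g`,
with respect to the conformal presymplectic form determined by `(lam0, A)`. -/
def XConf (c : ℝ → V3) (lam0 : ℝ) (A g : ℝ → V3) : ℝ → V3 := fun θ =>
  (-(1 / (3 * lam0))) •
    (cross3 (unitT c θ) (g θ) +
      (3 * lam0 + L2 c A c)⁻¹ •
        ((L2 c A (fun θ' => cross3 (unitT c θ') (g θ'))) •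
            cross3 (unitT c θ) (cross3 (unitT c θ) (c θ)) -
         (L2 c c g) • cross3 (unitT c θ) (A θ)))

lemma dot3_comm (u v : V3) : dot3 u v = dot3 v u := by simp only [dot3]; ring
lemma dot3_smul_left (r : ℝ) (u v : V3) : dot3 (r • u) v = r * dot3 u v := by
  simp only [dot3, Pi.smul_apply, smul_eq_mul]; ring
lemma dot3_smul_right (r : ℝ) (u v : V3) : dot3 u (r • v) = r * dot3 u v := by
  simp only [dot3, Pi.smul_apply, smul_eq_mul]; ring
lemma dot3_add_left (u v w : V3) : dot3 (u + v) w = dot3 u w + dot3 v w := by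
  simp only [dot3, Pi.add_apply]; ring
lemma dot3_sub_left (u v w : V3) : dot3 (u - v) w = dot3 u w - dot3 v w := by
  simp only [dot3, Pi.sub_apply]; ring
lemma dot3_cross_cyclic (u v w : V3) : dot3 (cross3 u v) w = dot3 v (cross3 w u) := by
  simp [dot3, cross3]; ring
lemma dot3_cross_smul_left (r : ℝ) (u v w : V3) :
    dot3 (cross3 (r • u) v) w = r * dot3 (cross3 u v) w := by
  simp [dot3, cross3, Pi.smul_apply, smul_eq_mul]; ring
lemma dot3_cross_cross4 (u v w z : V3) :
    dot3 (cross3 u v) (cross3 w z) = dot3 u w * dot3 v z - dot3 u z * dot3 v w := by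
  simp [dot3, cross3]; ring
lemma dot3_cross_cross_left (u v w z : V3) :
    dot3 (cross3 u (cross3 v w)) z = dot3 u w * dot3 v z - dot3 u v * dot3 w z := by
  simp [dot3, cross3]; ring
lemma dot3_cross_left (u v : V3) : dot3 (cross3 u v) u = 0 := by simp [dot3, cross3]; ring
lemma dot3_cross_right (u v : V3) : dot3 (cross3 u v) v = 0 := by simp [dot3, cross3]; ring
lemma dot3_left_cross (u v : V3) : dot3 u (cross3 u v) = 0 := by simp [dot3, cross3]; ring
lemma dot3_right_cross (u v : V3) : dot3 v (cross3 u v) = 0 := by simp [dot3, cross3]; ring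
lemma dot3_cross_swap (u v w : V3) : dot3 u (cross3 w v) = -(dot3 (cross3 u v) w) := by
  simp [dot3, cross3]; ring

lemma key0 (x cu av gv : V3) (n r s a b : ℝ) (hn : n ≠ 0) (hx : dot3 x x = n * n) :
    dot3 (r • (cross3 (n⁻¹ • x) gv +
        s • (a • cross3 (n⁻¹ • x) (cross3 (n⁻¹ • x) cu) - b • cross3 (n⁻¹ • x) av))) x = 0 := by
  have h1 : dot3 (cross3 (n⁻¹ • x) gv) x = 0 := by
    rw [dot3_cross_smul_left, dot3_cross_left, mul_zero]
  have h2 : dot3 (cross3 (n⁻¹ • x) (cross3 (n⁻¹ • x) cu)) x = 0 := by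
    rw [dot3_cross_cross_left]
    simp only [dot3_smul_left, dot3_smul_right]
    rw [hx, dot3_comm cu x]
    field_simp
    ring
  have h3 : dot3 (cross3 (n⁻¹ • x) av) x = 0 := by
    rw [dot3_cross_smul_left, dot3_cross_left, mul_zero]
  simp only [dot3_smul_left, dot3_add_left, dot3_sub_left, h1, h2, h3]
  ring

lemma key1 (x cu av gv kv : V3) (n r s a b : ℝ) (hn : n ≠ 0) (hx : dot3 x x = n * n)
    (hax : dot3 av x = 0) (hgx : dot3 gv x = 0) :
    dot3 (cross3 x (r • (cross3 (n⁻¹ • x) gv +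
        s • (a • cross3 (n⁻¹ • x) (cross3 (n⁻¹ • x) cu) - b • cross3 (n⁻¹ • x) av)))) kv
      = r * (-(n * dot3 gv kv) + s * (a * dot3 (cross3 cu x) kv + b * (n * dot3 av kv))) := by
  rw [dot3_cross_cyclic]
  have hgx' : dot3 gv x = 0 := hgx
  have hP : dot3 (cross3 (n⁻¹ • x) gv) (cross3 kv x) = -(n * dot3 gv kv) := by
    rw [dot3_cross_smul_left, dot3_cross_cross4, hgx, hx]
    field_simp; ring
  have hQ : dot3 (cross3 (n⁻¹ • x) (cross3 (n⁻¹ • x) cu)) (cross3 kv x)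
      = dot3 (cross3 cu x) kv := by
    rw [dot3_cross_cross_left]
    simp only [dot3_smul_left, dot3_smul_right]
    rw [hx, dot3_right_cross, dot3_cross_swap]
    field_simp
    ring
  have hR : dot3 (cross3 (n⁻¹ • x) av) (cross3 kv x) = -(n * dot3 av kv) := by
    rw [dot3_cross_smul_left, dot3_cross_cross4, hax, hx]
    field_simp; ring
  simp only [dot3_smul_left, dot3_add_left, dot3_sub_left, hP, hQ, hR]
  ring

lemma key2 (x cu av gv : V3) (n r s a b : ℝ) (hn : n ≠ 0) (hx : dot3 x x = n * n)
    (hax : dot3 av x = 0) (hgx : dot3 gv x = 0) :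
    dot3 (cross3 cu x) (r • (cross3 (n⁻¹ • x) gv +
        s • (a • cross3 (n⁻¹ • x) (cross3 (n⁻¹ • x) cu) - b • cross3 (n⁻¹ • x) av)))
      = r * (-(n * dot3 cu gv) + s * b * (n * dot3 av cu)) := by
  rw [dot3_comm]
  have hP : dot3 (cross3 (n⁻¹ • x) gv) (cross3 cu x) = -(n * dot3 cu gv) := by
    rw [dot3_cross_smul_left, dot3_cross_cross4, hgx, hx, dot3_comm gv cu]
    field_simp; ring
  have hQ : dot3 (cross3 (n⁻¹ • x) (cross3 (n⁻¹ • x) cu)) (cross3 cu x) = 0 := by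
    rw [dot3_cross_cross_left]
    simp only [dot3_smul_left, dot3_smul_right]
    rw [dot3_right_cross, dot3_left_cross]
    ring
  have hR : dot3 (cross3 (n⁻¹ • x) av) (cross3 cu x) = -(n * dot3 av cu) := by
    rw [dot3_cross_smul_left, dot3_cross_cross4, hax, hx]
    field_simp; ring
  simp only [dot3_smul_left, dot3_add_left, dot3_sub_left, hP, hQ, hR]
  ring

lemma key3 (x cu av gv : V3) (n r s a b : ℝ) (hn : n ≠ 0) (hx : dot3 x x = n * n)
    (hax : dot3 av x = 0) :
    dot3 av (r • (cross3 (n⁻¹ • x) gv +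
        s • (a • cross3 (n⁻¹ • x) (cross3 (n⁻¹ • x) cu) - b • cross3 (n⁻¹ • x) av)))
      = r * (dot3 av (cross3 (n⁻¹ • x) gv) - s * a * dot3 av cu) := by
  rw [dot3_comm av]
  have hP : dot3 (cross3 (n⁻¹ • x) gv) av = dot3 av (cross3 (n⁻¹ • x) gv) := dot3_comm _ _
  have hQ : dot3 (cross3 (n⁻¹ • x) (cross3 (n⁻¹ • x) cu)) av = -(dot3 av cu) := by
    rw [dot3_cross_cross_left]
    simp only [dot3_smul_left, dot3_smul_right]
    rw [hx, dot3_comm x av, hax, dot3_comm cu av]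
    field_simp
    ring
  have hR : dot3 (cross3 (n⁻¹ • x) av) av = 0 := by
    rw [dot3_cross_smul_left, dot3_cross_right, mul_zero]
  simp only [dot3_smul_left, dot3_add_left, dot3_sub_left, hP, hQ, hR]
  ring

lemma dot3_self_pos (u : V3) (hu : u ≠ 0) : 0 < dot3 u u := by
  have h : dot3 u u = u 0 ^ 2 + u 1 ^ 2 + u 2 ^ 2 := by simp only [dot3]; ring
  rw [h]
  by_contra hle
  push_neg at hle
  have h0 : u 0 = 0 := by nlinarith [sq_nonneg (u 0), sq_nonneg (u 1), sq_nonneg (u 2)]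
  have h1 : u 1 = 0 := by nlinarith [sq_nonneg (u 0), sq_nonneg (u 1), sq_nonneg (u 2)]
  have h2 : u 2 = 0 := by nlinarith [sq_nonneg (u 0), sq_nonneg (u 1), sq_nonneg (u 2)]
  apply hu
  funext i
  fin_cases i <;> simpa using (by assumption : _)

lemma norm3_pos (u : V3) (hu : u ≠ 0) : 0 < norm3 u :=
  Real.sqrt_pos.mpr (dot3_self_pos u hu)

lemma dot3_self_nonneg (u : V3) : 0 ≤ dot3 u u := by
  have h : dot3 u u = u 0 ^ 2 + u 1 ^ 2 + u 2 ^ 2 := by simp only [dot3]; ring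
  rw [h]; positivity

lemma norm3_sq (u : V3) : dot3 u u = norm3 u * norm3 u :=
  (Real.mul_self_sqrt (dot3_self_nonneg u)).symm

lemma cont_dot3 {f h : ℝ → V3} (hf : Continuous f) (hh : Continuous h) :
    Continuous fun θ => dot3 (f θ) (h θ) := by
  simp only [dot3]
  exact ((((continuous_apply 0).comp hf).mul ((continuous_apply 0).comp hh)).add
      (((continuous_apply 1).comp hf).mul ((continuous_apply 1).comp hh))).add
      (((continuous_apply 2).comp hf).mul ((continuous_apply 2).comp hh))

lemma cont_cross3 {f h : ℝ → V3} (hf : Continuous f) (hh : Continuous h) :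
    Continuous fun θ => cross3 (f θ) (h θ) := by
  apply continuous_pi
  intro i
  fin_cases i <;> simp only [cross3, Matrix.cons_val_zero, Matrix.cons_val_one,
    Matrix.head_cons, Matrix.cons_val_two, Matrix.tail_cons] <;>
    exact (((continuous_apply _).comp hf).mul ((continuous_apply _).comp hh)).sub
      (((continuous_apply _).comp hf).mul ((continuous_apply _).comp hh))

lemma cont_norm3 {f : ℝ → V3} (hf : Continuous f) :
    Continuous fun θ => norm3 (f θ) := by
  simp only [norm3]
  exact (cont_dot3 hf hf).sqrt

lemma integral_comb3 (α β γ : ℝ) (f1 f2 f3 : ℝ → ℝ)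
    (h1 : Continuous f1) (h2 : Continuous f2) (h3 : Continuous f3) :
    (∫ θ in (0:ℝ)..(2 * π), (α * f1 θ + β * f2 θ + γ * f3 θ))
      = α * (∫ θ in (0:ℝ)..(2 * π), f1 θ) + β * (∫ θ in (0:ℝ)..(2 * π), f2 θ)
        + γ * (∫ θ in (0:ℝ)..(2 * π), f3 θ) := by
  have i1 : IntervalIntegrable (fun θ => α * f1 θ) MeasureTheory.volume 0 (2 * π) := (continuous_const.mul h1).intervalIntegrable _ _
  have i2 : IntervalIntegrable (fun θ => β * f2 θ) MeasureTheory.volume 0 (2 * π) := (continuous_const.mul h2).intervalIntegrable _ _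
  have i3 : IntervalIntegrable (fun θ => γ * f3 θ) MeasureTheory.volume 0 (2 * π) := (continuous_const.mul h3).intervalIntegrable _ _
  rw [intervalIntegral.integral_add (i1.add i2) i3, intervalIntegral.integral_add i1 i2,
    intervalIntegral.integral_const_mul, intervalIntegral.integral_const_mul,
    intervalIntegral.integral_const_mul]

lemma integral_comb2 (α β : ℝ) (f1 f2 : ℝ → ℝ)
    (h1 : Continuous f1) (h2 : Continuous f2) :
    (∫ θ in (0:ℝ)..(2 * π), (α * f1 θ + β * f2 θ))
      = α * (∫ θ in (0:ℝ)..(2 * π), f1 θ) + β * (∫ θ in (0:ℝ)..(2 * π), f2 θ) := by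
  have i1 : IntervalIntegrable (fun θ => α * f1 θ) MeasureTheory.volume 0 (2 * π) := (continuous_const.mul h1).intervalIntegrable _ _
  have i2 : IntervalIntegrable (fun θ => β * f2 θ) MeasureTheory.volume 0 (2 * π) := (continuous_const.mul h2).intervalIntegrable _ _
  rw [intervalIntegral.integral_add i1 i2, intervalIntegral.integral_const_mul,
    intervalIntegral.integral_const_mul]

lemma key0' (x cu av gv t : V3) (n r s a b : ℝ) (ht : t = n⁻¹ • x)
    (hn : n ≠ 0) (hx : dot3 x x = n * n) :
    dot3 (r • (cross3 t gv + s • (a • cross3 t (cross3 t cu) - b • cross3 t av))) x = 0 := by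
  subst ht; exact key0 x cu av gv n r s a b hn hx

lemma key1' (x cu av gv kv t : V3) (n r s a b : ℝ) (ht : t = n⁻¹ • x)
    (hn : n ≠ 0) (hx : dot3 x x = n * n) (hax : dot3 av x = 0) (hgx : dot3 gv x = 0) :
    dot3 (cross3 x (r • (cross3 t gv + s • (a • cross3 t (cross3 t cu) - b • cross3 t av)))) kv
      = r * (-(n * dot3 gv kv) + s * (a * dot3 (cross3 cu x) kv + b * (n * dot3 av kv))) := by
  subst ht; exact key1 x cu av gv kv n r s a b hn hx hax hgx

lemma key2' (x cu av gv t : V3) (n r s a b : ℝ) (ht : t = n⁻¹ • x)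
    (hn : n ≠ 0) (hx : dot3 x x = n * n) (hax : dot3 av x = 0) (hgx : dot3 gv x = 0) :
    dot3 (cross3 cu x) (r • (cross3 t gv + s • (a • cross3 t (cross3 t cu) - b • cross3 t av)))
      = r * (-(n * dot3 cu gv) + s * b * (n * dot3 av cu)) := by
  subst ht; exact key2 x cu av gv n r s a b hn hx hax hgx

lemma key3' (x cu av gv t : V3) (n r s a b : ℝ) (ht : t = n⁻¹ • x)
    (hn : n ≠ 0) (hx : dot3 x x = n * n) (hax : dot3 av x = 0) :
    dot3 av (r • (cross3 t gv + s • (a • cross3 t (cross3 t cu) - b • cross3 t av)))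
      = r * (dot3 av (cross3 t gv) - s * a * dot3 av cu) := by
  subst ht; exact key3 x cu av gv n r s a b hn hx hax


/-- `XConf` is horizontal and satisfies `Ω^λ(X, k) = ⟨g, k⟩_{L²}` for all
directions `k`. -/
theorem conformal_hamiltonian_vector_field (c : ℝ → V3) (lam0 : ℝ) (A g : ℝ → V3)
    (hc : IsImmersed c) (hlam0 : 0 < lam0)
    (hA : IsDirection A) (hAt : ∀ θ, dot3 (A θ) (deriv c θ) = 0)
    (hg : IsDirection g) (hgt : ∀ θ, dot3 (g θ) (deriv c θ) = 0)
    (hne : 3 * lam0 + L2 c A c ≠ 0) :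
    (∀ θ, dot3 (XConf c lam0 A g θ) (deriv c θ) = 0) ∧
    ∀ k, IsDirection k → OmegaConf c lam0 A (XConf c lam0 A g) k = L2 c g k := by
  have hcc : Continuous c := hc.1.1.continuous
  have hdc : Continuous (deriv c) := hc.1.1.continuous_deriv (by simp)
  have hAc : Continuous A := hA.1.continuous
  have hgc : Continuous g := hg.1.continuous
  have hnz : ∀ θ, norm3 (deriv c θ) ≠ 0 := fun θ => (norm3_pos _ (hc.2 θ)).ne'
  have hx : ∀ θ, dot3 (deriv c θ) (deriv c θ) = norm3 (deriv c θ) * norm3 (deriv c θ) :=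
    fun θ => norm3_sq _
  have hT : ∀ θ, unitT c θ = (norm3 (deriv c θ))⁻¹ • deriv c θ := fun θ => rfl
  have h3l : (3 : ℝ) * lam0 ≠ 0 := by positivity
  constructor
  · intro θ
    simp only [XConf]
    exact key0' (deriv c θ) (c θ) (A θ) (g θ) (unitT c θ) (norm3 (deriv c θ)) _ _ _ _
      (hT θ) (hnz θ) (hx θ)
  · intro k hk
    have hkc : Continuous k := hk.1.continuous
    have hnC : Continuous fun θ => norm3 (deriv c θ) := cont_norm3 hdc
    have hTC : Continuous (unitT c) := by
      unfold unitT Ds; exact (hnC.inv₀ hnz).smul hdc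
    have cf1 : Continuous fun θ => dot3 (g θ) (k θ) * norm3 (deriv c θ) :=
      (cont_dot3 hgc hkc).mul hnC
    have cf2 : Continuous fun θ => dot3 (cross3 (c θ) (deriv c θ)) (k θ) :=
      cont_dot3 (cont_cross3 hcc hdc) hkc
    have cf3 : Continuous fun θ => dot3 (A θ) (k θ) * norm3 (deriv c θ) :=
      (cont_dot3 hAc hkc).mul hnC
    have cf4 : Continuous fun θ => dot3 (c θ) (g θ) * norm3 (deriv c θ) :=
      (cont_dot3 hcc hgc).mul hnC
    have cf5 : Continuous fun θ => dot3 (A θ) (c θ) * norm3 (deriv c θ) :=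
      (cont_dot3 hAc hcc).mul hnC
    have cf6 : Continuous fun θ => dot3 (A θ) (cross3 (unitT c θ) (g θ)) * norm3 (deriv c θ) :=
      (cont_dot3 hAc (cont_cross3 hTC hgc)).mul hnC
    set aT := L2 c A (fun θ' => cross3 (unitT c θ') (g θ')) with haT
    set bT := L2 c c g with hbT
    set mT := L2 c A c with hmT
    set sT := (3 * lam0 + mT)⁻¹ with hsT
    -- e1
    have e1 : (∫ θ in (0:ℝ)..(2 * π), dot3 (cross3 (deriv c θ) (XConf c lam0 A g θ)) (k θ))
        = (3 * lam0)⁻¹ * L2 c g k + (-((3 * lam0)⁻¹ * sT * aT)) * Theta c k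
          + (-((3 * lam0)⁻¹ * sT * bT)) * L2 c A k := by
      have hEq : Set.EqOn
          (fun θ => dot3 (cross3 (deriv c θ) (XConf c lam0 A g θ)) (k θ))
          (fun θ => (3 * lam0)⁻¹ * (dot3 (g θ) (k θ) * norm3 (deriv c θ))
            + (-((3 * lam0)⁻¹ * sT * aT)) * (dot3 (cross3 (c θ) (deriv c θ)) (k θ))
            + (-((3 * lam0)⁻¹ * sT * bT)) * (dot3 (A θ) (k θ) * norm3 (deriv c θ)))
          (Set.uIcc 0 (2 * π)) := by
        intro θ _
        simp only [XConf, ← haT, ← hbT, ← hmT, ← hsT]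
        rw [key1' (deriv c θ) (c θ) (A θ) (g θ) (k θ) (unitT c θ) (norm3 (deriv c θ))
          (-(1 / (3 * lam0))) sT aT bT (hT θ) (hnz θ) (hx θ) (hAt θ) (hgt θ)]
        field_simp
        ring
      rw [intervalIntegral.integral_congr hEq, integral_comb3 _ _ _ _ _ _ cf1 cf2 cf3]
      rfl
    -- e2
    have e2 : Theta c (XConf c lam0 A g)
        = (3 * lam0)⁻¹ * bT + (-((3 * lam0)⁻¹ * sT * bT)) * mT := by
      have hEq : Set.EqOn
          (fun θ => dot3 (cross3 (c θ) (deriv c θ)) (XConf c lam0 A g θ))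
          (fun θ => (3 * lam0)⁻¹ * (dot3 (c θ) (g θ) * norm3 (deriv c θ))
            + (-((3 * lam0)⁻¹ * sT * bT)) * (dot3 (A θ) (c θ) * norm3 (deriv c θ)))
          (Set.uIcc 0 (2 * π)) := by
        intro θ _
        simp only [XConf, ← haT, ← hbT, ← hmT, ← hsT]
        rw [key2' (deriv c θ) (c θ) (A θ) (g θ) (unitT c θ) (norm3 (deriv c θ))
          (-(1 / (3 * lam0))) sT aT bT (hT θ) (hnz θ) (hx θ) (hAt θ) (hgt θ)]
        field_simp
        ring
      have hTh : Theta c (XConf c lam0 A g)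
          = ∫ θ in (0:ℝ)..(2 * π), dot3 (cross3 (c θ) (deriv c θ)) (XConf c lam0 A g θ) := rfl
      rw [hTh, intervalIntegral.integral_congr hEq, integral_comb2 _ _ _ _ cf4 cf5]
      rfl
    -- e3
    have e3 : L2 c A (XConf c lam0 A g)
        = (-((3 * lam0)⁻¹)) * aT + ((3 * lam0)⁻¹ * sT * aT) * mT := by
      have hEq : Set.EqOn
          (fun θ => dot3 (A θ) (XConf c lam0 A g θ) * norm3 (deriv c θ))
          (fun θ => (-((3 * lam0)⁻¹)) * (dot3 (A θ) (cross3 (unitT c θ) (g θ)) * norm3 (deriv c θ))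
            + ((3 * lam0)⁻¹ * sT * aT) * (dot3 (A θ) (c θ) * norm3 (deriv c θ)))
          (Set.uIcc 0 (2 * π)) := by
        intro θ _
        simp only [XConf, ← haT, ← hbT, ← hmT, ← hsT]
        rw [key3' (deriv c θ) (c θ) (A θ) (g θ) (unitT c θ) (norm3 (deriv c θ))
          (-(1 / (3 * lam0))) sT aT bT (hT θ) (hnz θ) (hx θ) (hAt θ)]
        field_simp
        ring
      have hL : L2 c A (XConf c lam0 A g)
          = ∫ θ in (0:ℝ)..(2 * π), dot3 (A θ) (XConf c lam0 A g θ) * norm3 (deriv c θ) := rfl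
      rw [hL, intervalIntegral.integral_congr hEq, integral_comb2 _ _ _ _ cf6 cf5]
      rfl
    have hΩ : OmegaConf c lam0 A (XConf c lam0 A g) k
        = 3 * lam0 * (∫ θ in (0:ℝ)..(2 * π), dot3 (cross3 (deriv c θ) (XConf c lam0 A g θ)) (k θ))
          + Theta c (XConf c lam0 A g) * L2 c A k - Theta c k * L2 c A (XConf c lam0 A g) := rfl
    rw [hΩ, e1, e2, e3, hsT]
    field_simp
    ring
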